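/- Let S, P be symmetric matrices with ‖S − P‖₂ ≤ ε, and suppose all eigenvalues of S in an index block K₂ equal the common value σ_s > 0. Let U^S_{K₂} be the orthonormal eigenvectors of S for that eigenvalue, and U^P_{K₋₂} orthonormal eigenvectors of P corresponding to eigenvalues equal to −σ_s(P) (i.e., the negated block). Then ‖(U^S_{K₂})ᵀ U^P_{K₋₂}‖₂ ≤ ε / (σ_s(S) + σ_s(P)). -/

import Mathlib

/-!
Since `S` is symmetric, `Uᵀ S = σS Uᵀ`, while `P W = -σP W`; hence
`Uᵀ (S - P) W = (σS + σP) Uᵀ W`. Matrices with orthonormal columns have operator norm at most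
one, so the left side has norm at most `‖S - P‖ ≤ ε`.
-/

open Matrix
open scoped Matrix.Norms.L2Operator

namespace Matrix

section Eigenvectors

variable {R : Type*} {m n : Type*} [Fintype m]

lemma mul_eq_smul_of_forall_mulVec_col [CommSemiring R] {A : Matrix m m R} {U : Matrix m n R}
    {c : R} (h : ∀ j, A *ᵥ (fun i => U i j) = c • fun i => U i j) : A * U = c • U := by
  ext i j
  simpa [mul_apply, mulVec, dotProduct] using congrFun (h j) i

lemma transpose_mul_sub_mul_eq_smul [CommRing R] {k : Type*} {A B : Matrix m m R}
    {U : Matrix m n R} {W : Matrix m k R} {a b : R} (hA : A.IsSymm)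
    (hAU : A * U = a • U) (hBW : B * W = b • W) :
    Uᵀ * (A - B) * W = (a - b) • (Uᵀ * W) := by
  have hUA : Uᵀ * A = a • Uᵀ := by
    rw [← hA.eq, ← transpose_mul, hAU, transpose_smul]
  rw [Matrix.mul_sub, Matrix.sub_mul, hUA, Matrix.mul_assoc, hBW, Matrix.smul_mul,
    Matrix.mul_smul, sub_smul]

end Eigenvectors

section L2OpNorm

variable {𝕜 : Type*} [RCLike 𝕜] {l m n k : Type*} [Fintype l] [Fintype m] [Fintype n]

lemma l2_opNorm_one_le [DecidableEq n] : ‖(1 : Matrix n n 𝕜)‖ ≤ 1 := by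
  rw [← diagonal_one, l2_opNorm_diagonal]
  exact (pi_norm_const_le _).trans norm_one.le

lemma l2_opNorm_le_one_of_conjTranspose_mul_self_eq_one [DecidableEq n] {A : Matrix m n 𝕜}
    (h : Aᴴ * A = 1) : ‖A‖ ≤ 1 := by
  have hsq : ‖A‖ * ‖A‖ ≤ 1 := by
    rw [← l2_opNorm_conjTranspose_mul_self, h]
    exact l2_opNorm_one_le
  nlinarith [norm_nonneg A]

lemma l2_opNorm_mul_mul_le_of_le_one [Fintype k] [DecidableEq m] [DecidableEq n]
    [DecidableEq k] {A : Matrix l m 𝕜} {B : Matrix m n 𝕜} {C : Matrix n k 𝕜}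
    (hA : ‖A‖ ≤ 1) (hC : ‖C‖ ≤ 1) : ‖A * B * C‖ ≤ ‖B‖ :=
  calc ‖A * B * C‖ ≤ ‖A‖ * ‖B‖ * ‖C‖ := (l2_opNorm_mul _ _).trans (by grw [l2_opNorm_mul])
    _ ≤ 1 * ‖B‖ * 1 := by gcongr
    _ = ‖B‖ := by ring

end L2OpNorm

end Matrix

theorem repeated_block_cross_bound_general {n k₁ k₂ : ℕ} (S P : Matrix (Fin n) (Fin n) ℝ)
    (hS : S.IsSymm) (ε σS σP : ℝ)
    (hσS : 0 < σS) (hσP : 0 ≤ σP)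
    (hdiff : ‖S - P‖ ≤ ε)
    (U : Matrix (Fin n) (Fin k₁) ℝ) (W : Matrix (Fin n) (Fin k₂) ℝ)
    (hUorth : Uᵀ * U = 1) (hWorth : Wᵀ * W = 1)
    (hUeig : ∀ j, S.mulVec (fun i => U i j) = σS • (fun i => U i j))
    (hWeig : ∀ j, P.mulVec (fun i => W i j) = (-σP) • (fun i => W i j)) :
    ‖Uᵀ * W‖ ≤ ε / (σS + σP) := by
  have hσ : 0 < σS + σP := by linarith
  have hcross : Uᵀ * (S - P) * W = (σS + σP) • (Uᵀ * W) := by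
    rw [transpose_mul_sub_mul_eq_smul hS (mul_eq_smul_of_forall_mulVec_col hUeig)
      (mul_eq_smul_of_forall_mulVec_col hWeig), sub_neg_eq_add]
  have hU : ‖Uᵀ‖ ≤ 1 := by
    rw [← conjTranspose_eq_transpose_of_trivial, l2_opNorm_conjTranspose]
    exact l2_opNorm_le_one_of_conjTranspose_mul_self_eq_one
      (by rwa [conjTranspose_eq_transpose_of_trivial])
  have hW : ‖W‖ ≤ 1 := l2_opNorm_le_one_of_conjTranspose_mul_self_eq_one
    (by rwa [conjTranspose_eq_transpose_of_trivial])
  rw [le_div_iff₀ hσ, mul_comm, ← Real.norm_of_nonneg hσ.le, ← norm_smul, ← hcross]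
  exact (l2_opNorm_mul_mul_le_of_le_one hU hW).trans hdiff

/-- Cross-term bound for the repeated-singular-value block: if `S`, `P` are
symmetric with `‖S − P‖₂ ≤ ε`, the columns of `U` are orthonormal eigenvectors
of `S` all with the common eigenvalue `σS > 0`, and the columns of `W` are
orthonormal eigenvectors of `P` with eigenvalue `−σP` (the negated block),
then `‖Uᵀ W‖₂ ≤ ε / (σS + σP)`. -/
theorem repeated_block_cross_bound {n k₁ k₂ : ℕ} (S P : Matrix (Fin n) (Fin n) ℝ)
    (hS : S.IsSymm) (hP : P.IsSymm) (ε σS σP : ℝ)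
    (hσS : 0 < σS) (hσP : 0 ≤ σP)
    (hdiff : ‖S - P‖ ≤ ε)
    (U : Matrix (Fin n) (Fin k₁) ℝ) (W : Matrix (Fin n) (Fin k₂) ℝ)
    (hUorth : Uᵀ * U = 1) (hWorth : Wᵀ * W = 1)
    (hUeig : ∀ j, S.mulVec (fun i => U i j) = σS • (fun i => U i j))
    (hWeig : ∀ j, P.mulVec (fun i => W i j) = (-σP) • (fun i => W i j)) :
    ‖Uᵀ * W‖ ≤ ε / (σS + σP) :=
  repeated_block_cross_bound_general S P hS ε σS σP hσS hσP hdiff U W hUorth hWorth hUeig hWeig
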